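/- Let Π* be the rank-k orthogonal projector onto the top-k eigenspace of symmetric Σ with eigengap λ_k − λ_{k+1} > 0, and let Π̂_O be any maximizer of ⟨Σ̂, Π⟩ over Π ∈ F^k supported on the true support (in particular ⟨Σ̂_T, Π̂_O − Π*⟩ ≥ 0 where Σ̂_T is the restriction of Σ̂ to the support). Then ‖Π̂_O − Π*‖_F ≤ 2‖(Σ̂ − Σ)_T‖_F / (λ_k − λ_{k+1}). -/

import Mathlib

open Matrix BigOperators Finset

noncomputable def fip {p : ℕ} (A B : Matrix (Fin p) (Fin p) ℝ) : ℝ := (Aᵀ * B).trace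

noncomputable def fnorm {p : ℕ} (A : Matrix (Fin p) (Fin p) ℝ) : ℝ :=
  Real.sqrt (∑ i, ∑ j, (A i j) ^ 2)

def Fantope {p : ℕ} (k : ℕ) (X : Matrix (Fin p) (Fin p) ℝ) : Prop :=
  X.IsSymm ∧ X.PosSemidef ∧ (1 - X).PosSemidef ∧ X.trace = (k : ℝ)

/-- The orthogonal projector onto the span of the top-`k` eigenvectors. -/
def topProj {p : ℕ} (k : ℕ) (u : Fin p → Fin p → ℝ) : Matrix (Fin p) (Fin p) ℝ :=
  ∑ i ∈ Finset.univ.filter (fun i : Fin p => (i : ℕ) < k), vecMulVec (u i) (u i)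
open scoped Classical in
/-- Restriction of a matrix to an index set T (entries outside T are set to zero). -/
noncomputable def restrict {p : ℕ} (T : Set (Fin p × Fin p))
    (A : Matrix (Fin p) (Fin p) ℝ) : Matrix (Fin p) (Fin p) ℝ :=
  Matrix.of fun i j => if (i, j) ∈ T then A i j else 0

/-!
Writing `cᵢ = uᵢᵀ X uᵢ ∈ [0, 1]` for the weights of a Fantope point `X` on the eigenbasis (they sum
to `k`), both `‖Π* - X‖²/2` and `⟨Σ, Π* - X⟩/(λ_k - λ_{k+1})` are compared with `∑_{i<k} (1 - cᵢ)`,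
from above and from below. This is the curvature of the Fantope at `Π*`. For `X = Π̂_O`, the
difference `Π̂_O - Π*` is supported on `T`, so the optimality condition and Cauchy–Schwarz give
`⟨Σ, Π* - Π̂_O⟩ ≤ ⟨(Σ̂ - Σ)_T, Π̂_O - Π*⟩ ≤ ‖(Σ̂ - Σ)_T‖_F ‖Π̂_O - Π*‖_F`; dividing by
`‖Π̂_O - Π*‖_F` gives the bound.
-/

section Frobenius
variable {p : ℕ}

theorem fip_eq_sum (A B : Matrix (Fin p) (Fin p) ℝ) : fip A B = ∑ i, ∑ j, A i j * B i j := by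
  simp only [fip, trace, Matrix.diag, mul_apply, transpose_apply]
  exact Finset.sum_comm

theorem fip_comm (A B : Matrix (Fin p) (Fin p) ℝ) : fip A B = fip B A := by
  simp only [fip_eq_sum, mul_comm]

theorem fip_sub_left (A B C : Matrix (Fin p) (Fin p) ℝ) : fip (A - B) C = fip A C - fip B C := by
  simp [fip, sub_mul]

theorem fip_sub_right (A B C : Matrix (Fin p) (Fin p) ℝ) : fip A (B - C) = fip A B - fip A C := by
  simp [fip, mul_sub]

theorem fip_smul_left (c : ℝ) (A B : Matrix (Fin p) (Fin p) ℝ) : fip (c • A) B = c * fip A B := by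
  simp [fip]

theorem fip_sum_left {ι : Type*} (s : Finset ι) (f : ι → Matrix (Fin p) (Fin p) ℝ)
    (B : Matrix (Fin p) (Fin p) ℝ) : fip (∑ i ∈ s, f i) B = ∑ i ∈ s, fip (f i) B := by
  simp [fip, transpose_sum, Finset.sum_mul, trace_sum]

theorem fip_one_right (A : Matrix (Fin p) (Fin p) ℝ) : fip A 1 = A.trace := by
  simp [fip]

theorem fip_self_eq_trace_mul_self {X : Matrix (Fin p) (Fin p) ℝ} (hX : X.IsSymm) :
    fip X X = (X * X).trace := by
  rw [fip, hX.eq]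

theorem fnorm_nonneg (A : Matrix (Fin p) (Fin p) ℝ) : 0 ≤ fnorm A := Real.sqrt_nonneg _

theorem fnorm_sq (A : Matrix (Fin p) (Fin p) ℝ) : fnorm A ^ 2 = fip A A := by
  rw [fnorm, Real.sq_sqrt (by positivity), fip_eq_sum]
  simp only [sq]

theorem fnorm_sub_comm (A B : Matrix (Fin p) (Fin p) ℝ) : fnorm (A - B) = fnorm (B - A) := by
  simp only [fnorm, ← neg_sub B A, Matrix.neg_apply, neg_sq]

theorem fip_le_fnorm_mul_fnorm (A B : Matrix (Fin p) (Fin p) ℝ) : fip A B ≤ fnorm A * fnorm B := by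
  simp only [fip_eq_sum, fnorm, ← Fintype.sum_prod_type']
  exact Real.sum_mul_le_sqrt_mul_sqrt _ _ _

theorem fip_vecMulVec_left (v : Fin p → ℝ) (M : Matrix (Fin p) (Fin p) ℝ) :
    fip (vecMulVec v v) M = v ⬝ᵥ M *ᵥ v := by
  simp only [fip_eq_sum, vecMulVec_apply, dotProduct, mulVec, Finset.mul_sum]
  exact Finset.sum_congr rfl fun i _ => Finset.sum_congr rfl fun j _ => by ring

theorem fip_vecMulVec_vecMulVec (v w : Fin p → ℝ) :
    fip (vecMulVec v v) (vecMulVec w w) = (v ⬝ᵥ w) ^ 2 := by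
  simp only [fip_eq_sum, vecMulVec_apply, dotProduct, sq, Finset.sum_mul_sum]
  exact Finset.sum_congr rfl fun i _ => Finset.sum_congr rfl fun j _ => by ring

end Frobenius

open scoped ComplexOrder MatrixOrder in
theorem Matrix.PosSemidef.trace_mul_nonneg {𝕜 n : Type*} [RCLike 𝕜] [Fintype n] [DecidableEq n]
    {A B : Matrix n n 𝕜} (hA : A.PosSemidef) (hB : B.PosSemidef) : 0 ≤ (A * B).trace := by
  obtain ⟨C, rfl⟩ := CStarAlgebra.nonneg_iff_eq_star_mul_self.mp hA.nonneg
  rw [star_eq_conjTranspose, Matrix.mul_assoc, trace_mul_comm]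
  exact (hB.mul_mul_conjTranspose_same C).trace_nonneg

namespace Fantope
variable {p k : ℕ} {X : Matrix (Fin p) (Fin p) ℝ}

theorem fip_self_le (hX : Fantope k X) : fip X X ≤ k := by
  obtain ⟨hsymm, hpsd, hcompl, htr⟩ := hX
  have := hpsd.trace_mul_nonneg hcompl
  rw [Matrix.mul_sub, Matrix.mul_one, trace_sub, htr, ← fip_self_eq_trace_mul_self hsymm] at this
  linarith

theorem dotProduct_mulVec_nonneg (hX : Fantope k X) (v : Fin p → ℝ) : 0 ≤ v ⬝ᵥ X *ᵥ v := by
  simpa using hX.2.1.dotProduct_mulVec_nonneg v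

theorem dotProduct_mulVec_le (hX : Fantope k X) (v : Fin p → ℝ) : v ⬝ᵥ X *ᵥ v ≤ v ⬝ᵥ v := by
  have := hX.2.2.1.dotProduct_mulVec_nonneg v
  simp only [star_trivial, sub_mulVec, one_mulVec, dotProduct_sub] at this
  linarith

end Fantope

section Orthonormal
variable {p : ℕ} {u : Fin p → Fin p → ℝ}

theorem sum_vecMulVec_eq_one (horth : ∀ i j, u i ⬝ᵥ u j = if i = j then (1 : ℝ) else 0) :
    ∑ i, vecMulVec (u i) (u i) = 1 := by
  have hrows : of u * (of u)ᵀ = 1 := by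
    ext i j
    simpa [mul_apply, one_apply, dotProduct] using horth i j
  have hcols : (of u)ᵀ * of u = 1 := mul_eq_one_comm.mp hrows
  ext a b
  simpa [Matrix.sum_apply, vecMulVec_apply, mul_apply, mul_comm] using congr_fun₂ hcols a b

theorem trace_eq_sum_dotProduct_mulVec
    (horth : ∀ i j, u i ⬝ᵥ u j = if i = j then (1 : ℝ) else 0) (X : Matrix (Fin p) (Fin p) ℝ) :
    X.trace = ∑ i, u i ⬝ᵥ X *ᵥ u i := by
  rw [← fip_one_right, ← sum_vecMulVec_eq_one horth, fip_comm, fip_sum_left]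
  simp only [fip_vecMulVec_left]

theorem fip_vecMulVec_sum_vecMulVec
    (horth : ∀ i j, u i ⬝ᵥ u j = if i = j then (1 : ℝ) else 0) (s : Finset (Fin p)) (i : Fin p) :
    fip (vecMulVec (u i) (u i)) (∑ j ∈ s, vecMulVec (u j) (u j)) = if i ∈ s then 1 else 0 := by
  rw [fip_comm, fip_sum_left]
  simp [fip_vecMulVec_vecMulVec, horth]

theorem fip_sum_vecMulVec_self
    (horth : ∀ i j, u i ⬝ᵥ u j = if i = j then (1 : ℝ) else 0) (s : Finset (Fin p)) :
    fip (∑ i ∈ s, vecMulVec (u i) (u i)) (∑ i ∈ s, vecMulVec (u i) (u i)) = s.card := by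
  rw [fip_sum_left]
  simp [fip_vecMulVec_sum_vecMulVec horth]

end Orthonormal

section Curvature
variable {p : ℕ} {u : Fin p → Fin p → ℝ} {s : Finset (Fin p)} {X : Matrix (Fin p) (Fin p) ℝ}

theorem fnorm_sum_vecMulVec_sub_sq_le
    (horth : ∀ i j, u i ⬝ᵥ u j = if i = j then (1 : ℝ) else 0) (hX : Fantope s.card X) :
    fnorm (∑ i ∈ s, vecMulVec (u i) (u i) - X) ^ 2 ≤ 2 * ∑ i ∈ s, (1 - u i ⬝ᵥ X *ᵥ u i) := by
  set P := ∑ i ∈ s, vecMulVec (u i) (u i)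
  have hPX : fip P X = ∑ i ∈ s, u i ⬝ᵥ X *ᵥ u i := by
    simp only [P, fip_sum_left, fip_vecMulVec_left]
  have hexpand : fnorm (P - X) ^ 2 = fip P P - 2 * fip P X + fip X X := by
    rw [fnorm_sq, fip_sub_left, fip_sub_right, fip_sub_right, fip_comm X P]
    ring
  rw [hexpand, fip_sum_vecMulVec_self horth, hPX, Finset.sum_sub_distrib, Finset.sum_const,
    nsmul_one]
  linarith [hX.fip_self_le]

theorem gap_mul_sum_le_fip_sub {l : Fin p → ℝ} {a b : ℝ}
    (horth : ∀ i j, u i ⬝ᵥ u j = if i = j then (1 : ℝ) else 0) (hX : Fantope s.card X)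
    (ha : ∀ i ∈ s, a ≤ l i) (hb : ∀ i ∉ s, l i ≤ b) :
    (a - b) * ∑ i ∈ s, (1 - u i ⬝ᵥ X *ᵥ u i) ≤
      fip (∑ i, l i • vecMulVec (u i) (u i)) (∑ i ∈ s, vecMulVec (u i) (u i) - X) := by
  set c : Fin p → ℝ := fun i => u i ⬝ᵥ X *ᵥ u i
  set π : Fin p → ℝ := fun i => if i ∈ s then 1 else 0
  have hc_le : ∀ i, c i ≤ 1 := fun i => by
    simpa [c, horth] using hX.dotProduct_mulVec_le (u i)
  -- `π` and `c` have the same total mass, so the eigenvalues may be shifted by `b`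
  have hmass : ∑ i, (π i - c i) = 0 := by
    rw [Finset.sum_sub_distrib, ← trace_eq_sum_dotProduct_mulVec horth, hX.2.2.2]
    simp [π]
  calc (a - b) * ∑ i ∈ s, (1 - c i) = ∑ i, (a - b) * (if i ∈ s then 1 - c i else 0) := by
        simp only [Finset.mul_sum, mul_ite, mul_zero, Finset.sum_ite_mem, Finset.univ_inter]
    _ ≤ ∑ i, (l i - b) * (π i - c i) := by
        refine Finset.sum_le_sum fun i _ => ?_
        by_cases hi : i ∈ s
        · simp only [hi, π, if_true]
          nlinarith [ha i hi, hc_le i]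
        · simp only [hi, π, if_false]
          nlinarith [hb i hi, hX.dotProduct_mulVec_nonneg (u i)]
    _ = ∑ i, l i * (π i - c i) := by
        simp only [sub_mul, Finset.sum_sub_distrib, ← Finset.mul_sum, hmass, mul_zero, sub_zero]
    _ = _ := by
        simp only [fip_sum_left, fip_smul_left, fip_sub_right, fip_vecMulVec_sum_vecMulVec horth,
          fip_vecMulVec_left, mul_sub, Finset.sum_sub_distrib, π, c]

theorem Fantope.half_gap_mul_fnorm_sq_le {l : Fin p → ℝ} {a b : ℝ}
    (horth : ∀ i j, u i ⬝ᵥ u j = if i = j then (1 : ℝ) else 0) (hX : Fantope s.card X)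
    (hab : b ≤ a) (ha : ∀ i ∈ s, a ≤ l i) (hb : ∀ i ∉ s, l i ≤ b) :
    (a - b) / 2 * fnorm (∑ i ∈ s, vecMulVec (u i) (u i) - X) ^ 2 ≤
      fip (∑ i, l i • vecMulVec (u i) (u i)) (∑ i ∈ s, vecMulVec (u i) (u i) - X) := by
  have := mul_le_mul_of_nonneg_left (fnorm_sum_vecMulVec_sub_sq_le horth hX) (sub_nonneg.mpr hab)
  linarith [gap_mul_sum_le_fip_sub horth hX ha hb]

end Curvature

section Restrict
variable {p : ℕ} {T : Set (Fin p × Fin p)}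

theorem restrict_sub (A B : Matrix (Fin p) (Fin p) ℝ) :
    restrict T (A - B) = restrict T A - restrict T B := by
  ext i j
  by_cases h : (i, j) ∈ T <;> simp [_root_.restrict, h]

theorem fip_restrict_left {A D : Matrix (Fin p) (Fin p) ℝ}
    (hD : ∀ i j, (i, j) ∉ T → D i j = 0) : fip (restrict T A) D = fip A D := by
  simp only [fip_eq_sum]
  refine Finset.sum_congr rfl fun i _ => Finset.sum_congr rfl fun j _ => ?_
  by_cases h : (i, j) ∈ T <;> simp [_root_.restrict, h, hD]

theorem fip_sub_le_of_fip_restrict_nonneg {Sig SigHat X Y : Matrix (Fin p) (Fin p) ℝ}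
    (hsupp : ∀ i j, (i, j) ∉ T → (X - Y) i j = 0) (hopt : 0 ≤ fip (restrict T SigHat) (X - Y)) :
    fip Sig (Y - X) ≤ fnorm (restrict T (SigHat - Sig)) * fnorm (X - Y) := by
  have hsplit : fip (restrict T (SigHat - Sig)) (X - Y) =
      fip (restrict T SigHat) (X - Y) + fip Sig (Y - X) := by
    rw [restrict_sub, fip_sub_left, fip_restrict_left (A := Sig) hsupp,
      fip_sub_right Sig X, fip_sub_right Sig Y]
    ring
  linarith [fip_le_fnorm_mul_fnorm (restrict T (SigHat - Sig)) (X - Y)]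

end Restrict

/-- oracle error bound.  If Π* is the top-k projector of Σ with eigengap
λ_k − λ_{k+1} > 0 and Π̂_O ∈ F^k is supported on T with ⟨Σ̂_T, Π̂_O − Π*⟩ ≥ 0, then
‖Π̂_O − Π*‖_F ≤ 2‖(Σ̂ − Σ)_T‖_F / (λ_k − λ_{k+1}). -/
theorem oracle_estimator_error_bound (p k : ℕ) (hkp : k < p)
    (Sig SigHat : Matrix (Fin p) (Fin p) ℝ)
    (l : Fin p → ℝ) (u : Fin p → Fin p → ℝ)
    (hdecomp : Sig = ∑ i, l i • vecMulVec (u i) (u i))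
    (horth : ∀ i j, u i ⬝ᵥ u j = if i = j then (1 : ℝ) else 0)
    (hl : Antitone l)
    (hgap : l ⟨k, hkp⟩ < l ⟨k - 1, by omega⟩)
    (T : Set (Fin p × Fin p))
    (PO : Matrix (Fin p) (Fin p) ℝ) (hPO : Fantope k PO)
    (hsuppStar : ∀ i j, (i, j) ∉ T → topProj k u i j = 0)
    (hsuppO : ∀ i j, (i, j) ∉ T → PO i j = 0)
    (hopt : 0 ≤ fip (restrict T SigHat) (PO - topProj k u)) :
    fnorm (PO - topProj k u) ≤
      2 * fnorm (restrict T (SigHat - Sig)) / (l ⟨k - 1, by omega⟩ - l ⟨k, hkp⟩) := by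
  set s : Finset (Fin p) := {i | (i : ℕ) < k}
  have hP : topProj k u = ∑ i ∈ s, vecMulVec (u i) (u i) := rfl
  have hPO' : Fantope s.card PO := by
    rwa [show s.card = k by simp [s, Fin.card_filter_val_lt, hkp.le]]
  have htop : ∀ i ∈ s, l ⟨k - 1, by omega⟩ ≤ l i := fun i hi =>
    hl (show (i : ℕ) ≤ k - 1 by have : (i : ℕ) < k := (by simpa [s] using hi); omega)
  have hbottom : ∀ i ∉ s, l i ≤ l ⟨k, hkp⟩ := fun i hi =>
    hl (show k ≤ (i : ℕ) by simpa [s] using hi)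
  have hcurv := Fantope.half_gap_mul_fnorm_sq_le horth hPO' hgap.le htop hbottom
  have hest := fip_sub_le_of_fip_restrict_nonneg (Sig := Sig)
    (fun i j hij => by simp [hsuppStar i j hij, hsuppO i j hij]) hopt
  rw [← hdecomp, ← hP, fnorm_sub_comm] at hcurv
  have hquadratic := hcurv.trans hest
  rw [le_div_iff₀ (sub_pos.mpr hgap)]
  nlinarith [fnorm_nonneg (PO - topProj k u), fnorm_nonneg (restrict T (SigHat - Sig))]
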